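/- Let τ ∈ ℂ \ (1/2)ℤ (so q = exp(2πiτ) ≠ ±1) and let λ, α, ρ ∈ ℂ. Define the first order difference operator T' on meromorphic functions on ℂ by (T'f)(z) = (1/(q^{−1}−q))·[ (q^{ρ} + q^{−ρ} − q^{z−1+iλ} − q^{1−z−iλ})·f(z−2) + (q^{z−iλ} + q^{iλ−z} − q^{ρ} − q^{−ρ})·f(z) ] (this operator realizes π_{−λ}(Y_ρ°) for Koornwinder's twisted primitive element Y_ρ). Then a meromorphic function f on ℂ satisfies T'f = μ_α(ρ)·f (as meromorphic functions) if and only if f satisfies the first order difference equation f(z−2) = [ sin(π(iλ+α+ρ−z)τ)·sin(π(−iλ+α+ρ+z)τ) / ( sin(π(iλ+ρ−1+z)τ)·sin(π(−iλ+ρ+1−z)τ) ) ]·f(z). -/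

import Mathlib

/-!
Since `q^u + q^{-u} = 2 cos (2πτu)`, both coefficients of `T'` and the numerator of `μ_α(ρ)` are
differences of cosines, and the product-to-sum formula turns them into products of sines:
`(q^{-1} - q)(T'f - μ_α(ρ) f)(z)` is `4 (sin·sin·f(z) - sin·sin·f(z-2))` with exactly the four sines
of the difference equation. As `q ≠ ±1`, the factor `q^{-1} - q` is invertible, and the two
equations are equivalent at every point where the denominator sines do not vanish.
-/

noncomputable section

open Complex

/-- `q^u = exp(2πiτu)`. -/
def qpow (τ u : ℂ) : ℂ := Complex.exp (2 * (Real.pi : ℂ) * Complex.I * τ * u)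

/-- The eigenvalue constant `μ_α(ρ) = ( q^ρ(1−q^α) + q^{−ρ}(1−q^{−α}) ) / (q − q^{−1})`. -/
def muEig (τ α ρ : ℂ) : ℂ :=
  (qpow τ ρ * (1 - qpow τ α) + qpow τ (-ρ) * (1 - qpow τ (-α))) / (qpow τ 1 - qpow τ (-1))

/-- The first order difference operator realizing `π_{−λ}(Y_ρ°)` for Koornwinder's
twisted primitive element: `(T'f)(z) = (1/(q^{−1}−q))·[
(q^ρ + q^{−ρ} − q^{z−1+iλ} − q^{1−z−iλ})·f(z−2) +
(q^{z−iλ} + q^{iλ−z} − q^ρ − q^{−ρ})·f(z) ]`. -/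
def twistOpCirc (τ lam ρ : ℂ) (f : ℂ → ℂ) (z : ℂ) : ℂ :=
  (1 / (qpow τ (-1) - qpow τ 1)) *
    ((qpow τ ρ + qpow τ (-ρ) - qpow τ (z - 1 + Complex.I * lam) -
        qpow τ (1 - z - Complex.I * lam)) * f (z - 2) +
      (qpow τ (z - Complex.I * lam) + qpow τ (Complex.I * lam - z) - qpow τ ρ -
        qpow τ (-ρ)) * f z)

open scoped Real

lemma qpow_add (τ u v : ℂ) : qpow τ (u + v) = qpow τ u * qpow τ v := by
  rw [qpow, qpow, qpow, ← Complex.exp_add]; ring_nf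

lemma qpow_add_qpow_neg (τ u : ℂ) : qpow τ u + qpow τ (-u) = 2 * cos (2 * π * τ * u) := by
  rw [two_cos, qpow, qpow]; ring_nf

lemma qpow_sub_qpow_neg (τ u : ℂ) : qpow τ u - qpow τ (-u) = 2 * I * sin (2 * π * τ * u) := by
  rw [mul_comm 2 I, mul_assoc, two_sin, qpow, qpow]
  ring_nf
  rw [I_sq]
  ring_nf

lemma qpow_one_sub_qpow_neg_one_ne_zero {τ : ℂ} (hτ : ∀ n : ℤ, 2 * τ ≠ n) :
    qpow τ 1 - qpow τ (-1) ≠ 0 := by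
  rw [qpow_sub_qpow_neg, mul_one]
  refine mul_ne_zero (mul_ne_zero two_ne_zero I_ne_zero) fun h => ?_
  obtain ⟨n, hn⟩ := sin_eq_zero_iff.mp h
  refine hτ n (mul_right_cancel₀ (ofReal_ne_zero.mpr Real.pi_ne_zero) ?_)
  linear_combination hn

lemma qpow_add_qpow_neg_sub (τ u v : ℂ) :
    qpow τ u + qpow τ (-u) - (qpow τ v + qpow τ (-v)) =
      -4 * sin (π * (u + v) * τ) * sin (π * (u - v) * τ) := by
  rw [qpow_add_qpow_neg, qpow_add_qpow_neg,
    show 2 * π * τ * u = π * (u + v) * τ + π * (u - v) * τ by ring,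
    show 2 * π * τ * v = π * (u + v) * τ - π * (u - v) * τ by ring, cos_add, cos_sub]
  ring

lemma mul_twistOpCirc_sub_muEig_mul {τ : ℂ} (hq : qpow τ 1 - qpow τ (-1) ≠ 0)
    (lam α ρ : ℂ) (f : ℂ → ℂ) (z : ℂ) :
    (qpow τ (-1) - qpow τ 1) * (twistOpCirc τ lam ρ f z - muEig τ α ρ * f z) =
      4 * (sin (π * (I * lam + α + ρ - z) * τ) * sin (π * (-(I * lam) + α + ρ + z) * τ) * f z
        - sin (π * (I * lam + ρ - 1 + z) * τ) * sin (π * (-(I * lam) + ρ + 1 - z) * τ)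
          * f (z - 2)) := by
  have hshift := qpow_add_qpow_neg_sub τ ρ (z - 1 + I * lam)
  have hdiag := qpow_add_qpow_neg_sub τ (ρ + α) (z - I * lam)
  rw [neg_add, qpow_add, qpow_add] at hdiag
  have hq' : qpow τ (-1) - qpow τ 1 ≠ 0 := by rwa [← neg_sub, neg_ne_zero]
  rw [twistOpCirc, muEig, mul_sub, ← mul_assoc, mul_one_div_cancel hq', one_mul,
    ← neg_sub (qpow τ 1), neg_mul, div_mul_eq_mul_div, mul_div_assoc', mul_div_cancel_left₀ _ hq]
  -- `ring_nf` also identifies arguments such as `1 - z - I * lam` and `-(z - 1 + I * lam)`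
  linear_combination (norm := ring_nf) f (z - 2) * hshift - f z * hdiag

theorem twisted_primitive_circ_eigenfunction_iff_general (τ : ℂ)
    (hτ : ∀ n : ℤ, 2 * τ ≠ (n : ℂ)) (lam α ρ : ℂ) (f : ℂ → ℂ) :
    (∀ z : ℂ,
        Complex.sin ((Real.pi : ℂ) * (Complex.I * lam + ρ - 1 + z) * τ) ≠ 0 →
        Complex.sin ((Real.pi : ℂ) * (-(Complex.I * lam) + ρ + 1 - z) * τ) ≠ 0 →
        twistOpCirc τ lam ρ f z = muEig τ α ρ * f z) ↔
    (∀ z : ℂ,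
        Complex.sin ((Real.pi : ℂ) * (Complex.I * lam + ρ - 1 + z) * τ) ≠ 0 →
        Complex.sin ((Real.pi : ℂ) * (-(Complex.I * lam) + ρ + 1 - z) * τ) ≠ 0 →
        f (z - 2) =
          (Complex.sin ((Real.pi : ℂ) * (Complex.I * lam + α + ρ - z) * τ) *
              Complex.sin ((Real.pi : ℂ) * (-(Complex.I * lam) + α + ρ + z) * τ)) /
            (Complex.sin ((Real.pi : ℂ) * (Complex.I * lam + ρ - 1 + z) * τ) *
              Complex.sin ((Real.pi : ℂ) * (-(Complex.I * lam) + ρ + 1 - z) * τ)) * f z) := by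
  have hq := qpow_one_sub_qpow_neg_one_ne_zero hτ
  have hq' : qpow τ (-1) - qpow τ 1 ≠ 0 := by rwa [← neg_sub, neg_ne_zero]
  refine forall_congr' fun z => imp_congr_right fun hs₁ => imp_congr_right fun hs₂ => ?_
  rw [← sub_eq_zero, ← mul_right_inj' hq', mul_zero, mul_twistOpCirc_sub_muEig_mul hq,
    mul_eq_zero, or_iff_right (by norm_num : (4 : ℂ) ≠ 0), sub_eq_zero, eq_comm,
    div_mul_eq_mul_div, eq_div_iff (mul_ne_zero hs₁ hs₂), mul_comm (f (z - 2))]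

/-- A meromorphic function `f` is an eigenfunction of `π_{−λ}(Y_ρ°)` with eigenvalue
`μ_α(ρ)` (as meromorphic functions, i.e. away from the zeros of the denominators)
if and only if it satisfies the first order difference equation
`f(z−2) = [sin(π(iλ+α+ρ−z)τ)·sin(π(−iλ+α+ρ+z)τ) /
  (sin(π(iλ+ρ−1+z)τ)·sin(π(−iλ+ρ+1−z)τ))]·f(z)`. -/
theorem twisted_primitive_circ_eigenfunction_iff (τ : ℂ)
    (hτ : ∀ n : ℤ, 2 * τ ≠ (n : ℂ)) (lam α ρ : ℂ) (f : ℂ → ℂ)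
    (hf : MeromorphicOn f Set.univ) :
    (∀ z : ℂ,
        Complex.sin ((Real.pi : ℂ) * (Complex.I * lam + ρ - 1 + z) * τ) ≠ 0 →
        Complex.sin ((Real.pi : ℂ) * (-(Complex.I * lam) + ρ + 1 - z) * τ) ≠ 0 →
        twistOpCirc τ lam ρ f z = muEig τ α ρ * f z) ↔
    (∀ z : ℂ,
        Complex.sin ((Real.pi : ℂ) * (Complex.I * lam + ρ - 1 + z) * τ) ≠ 0 →
        Complex.sin ((Real.pi : ℂ) * (-(Complex.I * lam) + ρ + 1 - z) * τ) ≠ 0 →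
        f (z - 2) =
          (Complex.sin ((Real.pi : ℂ) * (Complex.I * lam + α + ρ - z) * τ) *
              Complex.sin ((Real.pi : ℂ) * (-(Complex.I * lam) + α + ρ + z) * τ)) /
            (Complex.sin ((Real.pi : ℂ) * (Complex.I * lam + ρ - 1 + z) * τ) *
              Complex.sin ((Real.pi : ℂ) * (-(Complex.I * lam) + ρ + 1 - z) * τ)) * f z) :=
  twisted_primitive_circ_eigenfunction_iff_general τ hτ lam α ρ f
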